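/- arXiv:2410.14631 — 6 statements merged into one kernel-verified Lean document; each statement's English description precedes it below -/
import Mathlib

section
/- Let Z₁, Z₂, Z₃ and B₁, B₂, B₃ be K-subspaces of (Fin n₁ → K), (Fin n₂ → K), (Fin n₃ → K) respectively, and let f be a trilinear map. Then the following are equivalent: (a) for all ζᵢ ∈ Zᵢ and βᵢ ∈ Bᵢ (i = 1,2,3), tr(f(ζ₁+β₁, ζ₂+β₂, ζ₃+β₃)) = tr(f(ζ₁, ζ₂, ζ₃)); (b) for all ζᵢ ∈ Zᵢ and βᵢ ∈ Bᵢ (i = 1,2,3), f(ζ₁+β₁, ζ₂+β₂, ζ₃+β₃) = f(ζ₁, ζ₂, ζ₃). -/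
/-- For a trilinear map `f` over a finite field `K` of characteristic `p`
and subspaces `Zᵢ, Bᵢ`, the invariance of `tr ∘ f` under shifts by the `Bᵢ` is equivalent
to the invariance of `f` itself. -/
theorem trace_invariance_iff_invariance
    {p : ℕ} [Fact p.Prime] {K : Type*} [Field K] [Fintype K] [CharP K p]
    [Algebra (ZMod p) K]
    {n₁ n₂ n₃ : ℕ}
    (f : (Fin n₁ → K) → (Fin n₂ → K) → (Fin n₃ → K) → K)
    (hadd₁ : ∀ x x' y z, f (x + x') y z = f x y z + f x' y z)
    (hsmul₁ : ∀ (a : K) x y z, f (a • x) y z = a * f x y z)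
    (hadd₂ : ∀ x y y' z, f x (y + y') z = f x y z + f x y' z)
    (hsmul₂ : ∀ (a : K) x y z, f x (a • y) z = a * f x y z)
    (hadd₃ : ∀ x y z z', f x y (z + z') = f x y z + f x y z')
    (hsmul₃ : ∀ (a : K) x y z, f x y (a • z) = a * f x y z)
    (Z₁ B₁ : Submodule K (Fin n₁ → K))
    (Z₂ B₂ : Submodule K (Fin n₂ → K))
    (Z₃ B₃ : Submodule K (Fin n₃ → K)) :
    (∀ ζ₁ ∈ Z₁, ∀ ζ₂ ∈ Z₂, ∀ ζ₃ ∈ Z₃, ∀ β₁ ∈ B₁, ∀ β₂ ∈ B₂, ∀ β₃ ∈ B₃,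
        Algebra.trace (ZMod p) K (f (ζ₁ + β₁) (ζ₂ + β₂) (ζ₃ + β₃)) =
          Algebra.trace (ZMod p) K (f ζ₁ ζ₂ ζ₃)) ↔
      (∀ ζ₁ ∈ Z₁, ∀ ζ₂ ∈ Z₂, ∀ ζ₃ ∈ Z₃, ∀ β₁ ∈ B₁, ∀ β₂ ∈ B₂, ∀ β₃ ∈ B₃,
        f (ζ₁ + β₁) (ζ₂ + β₂) (ζ₃ + β₃) = f ζ₁ ζ₂ ζ₃) := by
  constructor
  · intro H ζ₁ hζ₁ ζ₂ hζ₂ ζ₃ hζ₃ β₁ hβ₁ β₂ hβ₂ β₃ hβ₃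
    set tr := Algebra.trace (ZMod p) K with htr
    -- expansion
    have expand : ∀ a b c : K,
        f (ζ₁ + a • β₁) (ζ₂ + b • β₂) (ζ₃ + c • β₃) =
          f ζ₁ ζ₂ ζ₃ + a * f β₁ ζ₂ ζ₃ + b * f ζ₁ β₂ ζ₃ + c * f ζ₁ ζ₂ β₃
          + a * b * f β₁ β₂ ζ₃ + a * c * f β₁ ζ₂ β₃ + b * c * f ζ₁ β₂ β₃
          + a * b * c * f β₁ β₂ β₃ := by
      intro a b c
      rw [hadd₁, hadd₂, hadd₂, hadd₃, hadd₃, hadd₃, hadd₃,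
        hsmul₁, hsmul₁, hsmul₁, hsmul₁, hsmul₂, hsmul₂, hsmul₂, hsmul₂,
        hsmul₃, hsmul₃, hsmul₃, hsmul₃]
      ring
    have H' : ∀ a b c : K,
        tr (a * f β₁ ζ₂ ζ₃) + tr (b * f ζ₁ β₂ ζ₃) + tr (c * f ζ₁ ζ₂ β₃)
          + tr (a * b * f β₁ β₂ ζ₃) + tr (a * c * f β₁ ζ₂ β₃)
          + tr (b * c * f ζ₁ β₂ β₃) + tr (a * b * c * f β₁ β₂ β₃) = 0 := by
      intro a b c
      have := H ζ₁ hζ₁ ζ₂ hζ₂ ζ₃ hζ₃ (a • β₁) (B₁.smul_mem a hβ₁)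
        (b • β₂) (B₂.smul_mem b hβ₂) (c • β₃) (B₃.smul_mem c hβ₃)
      rw [expand a b c] at this
      simp only [map_add] at this
      linear_combination this
    have hA : ∀ t : K, tr (t * f β₁ ζ₂ ζ₃) = 0 := by
      intro t; have := H' t 0 0; simpa using this
    have hB : ∀ t : K, tr (t * f ζ₁ β₂ ζ₃) = 0 := by
      intro t; have := H' 0 t 0; simpa using this
    have hC : ∀ t : K, tr (t * f ζ₁ ζ₂ β₃) = 0 := by
      intro t; have := H' 0 0 t; simpa using this
    have hAB : ∀ t : K, tr (t * f β₁ β₂ ζ₃) = 0 := by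
      intro t; have := H' t 1 0
      simp only [mul_one, one_mul, mul_zero, zero_mul, map_zero, add_zero] at this
      have h1 := hA t; have h2 : tr (f ζ₁ β₂ ζ₃) = 0 := by simpa using hB 1
      linear_combination this - h1 - h2
    have hAC : ∀ t : K, tr (t * f β₁ ζ₂ β₃) = 0 := by
      intro t; have := H' t 0 1
      simp only [mul_one, one_mul, mul_zero, zero_mul, map_zero, add_zero] at this
      have h1 := hA t; have h2 : tr (f ζ₁ ζ₂ β₃) = 0 := by simpa using hC 1
      linear_combination this - h1 - h2
    have hBC : ∀ t : K, tr (t * f ζ₁ β₂ β₃) = 0 := by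
      intro t; have := H' 0 t 1
      simp only [mul_one, one_mul, mul_zero, zero_mul, map_zero, add_zero, zero_add] at this
      have h1 := hB t; have h2 : tr (f ζ₁ ζ₂ β₃) = 0 := by simpa using hC 1
      linear_combination this - h1 - h2
    have hABC : ∀ t : K, tr (t * f β₁ β₂ β₃) = 0 := by
      intro t; have := H' t 1 1
      simp only [mul_one, one_mul] at this
      have h1 := hA t
      have h2 : tr (f ζ₁ β₂ ζ₃) = 0 := by simpa using hB 1
      have h3 : tr (f ζ₁ ζ₂ β₃) = 0 := by simpa using hC 1
      have h4 := hAB t; have h5 := hAC t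
      have h6 : tr (f ζ₁ β₂ β₃) = 0 := by simpa using hBC 1
      linear_combination this - h1 - h2 - h3 - h4 - h5 - h6
    -- nondegeneracy
    have key : f (ζ₁ + β₁) (ζ₂ + β₂) (ζ₃ + β₃) - f ζ₁ ζ₂ ζ₃ = 0 := by
      have hone : ∀ x : Fin n₁ → K, (1 : K) • x = x := fun x => one_smul K x
      have hexp := expand 1 1 1
      rw [one_smul, one_smul, one_smul] at hexp
      apply (traceForm_nondegenerate (ZMod p) K).1
      intro t
      rw [Algebra.traceForm_apply]
      rw [hexp]
      have : (f ζ₁ ζ₂ ζ₃ + 1 * f β₁ ζ₂ ζ₃ + 1 * f ζ₁ β₂ ζ₃ + 1 * f ζ₁ ζ₂ β₃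
          + 1 * 1 * f β₁ β₂ ζ₃ + 1 * 1 * f β₁ ζ₂ β₃ + 1 * 1 * f ζ₁ β₂ β₃
          + 1 * 1 * 1 * f β₁ β₂ β₃ - f ζ₁ ζ₂ ζ₃) * t =
          t * f β₁ ζ₂ ζ₃ + t * f ζ₁ β₂ ζ₃ + t * f ζ₁ ζ₂ β₃
          + t * f β₁ β₂ ζ₃ + t * f β₁ ζ₂ β₃ + t * f ζ₁ β₂ β₃
          + t * f β₁ β₂ β₃ := by ring
      rw [this]
      simp only [← htr, map_add, hA t, hB t, hC t, hAB t, hAC t, hBC t, hABC t, add_zero]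
    exact sub_eq_zero.mp key
  · intro H ζ₁ hζ₁ ζ₂ hζ₂ ζ₃ hζ₃ β₁ hβ₁ β₂ hβ₂ β₃ hβ₃
    rw [H ζ₁ hζ₁ ζ₂ hζ₂ ζ₃ hζ₃ β₁ hβ₁ β₂ hβ₂ β₃ hβ₃]
end

section
/- Let β¹, …, βˢ and ζ¹, …, ζᵏ be vectors in (Fin n → ZMod 2) such that the combined list β¹, …, βˢ, ζ¹, …, ζᵏ consists of pairwise distinct vectors and: (1) Σᵢ βᵃᵢ = 0 for every a; (2) Σᵢ ζᵃᵢ = 1 for every a; (3) Σᵢ xᵢ yᵢ = 0 for any two distinct vectors x, y in the combined list; (4) Σᵢ xᵢ yᵢ zᵢ = 0 for any three pairwise distinct vectors x, y, z in the combined list. Let B be the span of {β¹, …, βˢ} and Z the span of {β¹, …, βˢ, ζ¹, …, ζᵏ}. Then for all ζ₁, ζ₂, ζ₃ ∈ Z and b₁, b₂, b₃ ∈ B: Σᵢ (ζ₁+b₁)ᵢ (ζ₂+b₂)ᵢ (ζ₃+b₃)ᵢ = Σᵢ (ζ₁)ᵢ (ζ₂)ᵢ (ζ₃)ᵢ. 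-/
open Finset

private def Tform {n : ℕ} (x y z : Fin n → ZMod 2) : ZMod 2 :=
  ∑ i : Fin n, x i * y i * z i

private lemma Tform_swap12 {n : ℕ} (x y z : Fin n → ZMod 2) :
    Tform x y z = Tform y x z := by
  unfold Tform; exact Finset.sum_congr rfl fun i _ => by ring

private lemma Tform_swap13 {n : ℕ} (x y z : Fin n → ZMod 2) :
    Tform x y z = Tform z y x := by
  unfold Tform; exact Finset.sum_congr rfl fun i _ => by ring

private lemma Tform_add_left {n : ℕ} (x x' y z : Fin n → ZMod 2) :
    Tform (x + x') y z = Tform x y z + Tform x' y z := by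
  unfold Tform
  rw [← Finset.sum_add_distrib]
  exact Finset.sum_congr rfl fun i _ => by simp [add_mul]

private lemma Tform_smul_left {n : ℕ} (c : ZMod 2) (x y z : Fin n → ZMod 2) :
    Tform (c • x) y z = c * Tform x y z := by
  unfold Tform
  rw [Finset.mul_sum]
  exact Finset.sum_congr rfl fun i _ => by simp [mul_assoc]

private lemma Tform_zero_left {n : ℕ} (y z : Fin n → ZMod 2) :
    Tform 0 y z = 0 := by
  simp [Tform]

open Finset in
/-- Triorthogonality implies that the trilinear form
`(a,b,c) ↦ Σᵢ aᵢ bᵢ cᵢ` is invariant under shifting cocycles (spanned by the `β`'s and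
`ζ`'s) by coboundaries (spanned by the `β`'s). -/
theorem triorthogonal_trilinear_invariance
    {n s k : ℕ}
    (β : Fin s → (Fin n → ZMod 2)) (ζ : Fin k → (Fin n → ZMod 2))
    (hdistinct : Function.Injective (Sum.elim β ζ))
    (h1 : ∀ a : Fin s, ∑ i : Fin n, β a i = 0)
    (h2 : ∀ a : Fin k, ∑ i : Fin n, ζ a i = 1)
    (h3 : ∀ a b : Fin s ⊕ Fin k, a ≠ b →
      ∑ i : Fin n, Sum.elim β ζ a i * Sum.elim β ζ b i = 0)
    (h4 : ∀ a b c : Fin s ⊕ Fin k, a ≠ b → a ≠ c → b ≠ c →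
      ∑ i : Fin n, Sum.elim β ζ a i * Sum.elim β ζ b i * Sum.elim β ζ c i = 0)
    (B : Submodule (ZMod 2) (Fin n → ZMod 2)) (hB : B = Submodule.span (ZMod 2) (Set.range β))
    (Z : Submodule (ZMod 2) (Fin n → ZMod 2))
    (hZ : Z = Submodule.span (ZMod 2) (Set.range β ∪ Set.range ζ)) :
    ∀ ζ₁ ∈ Z, ∀ ζ₂ ∈ Z, ∀ ζ₃ ∈ Z, ∀ b₁ ∈ B, ∀ b₂ ∈ B, ∀ b₃ ∈ B,
      ∑ i : Fin n, (ζ₁ + b₁) i * (ζ₂ + b₂) i * (ζ₃ + b₃) i =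
        ∑ i : Fin n, ζ₁ i * ζ₂ i * ζ₃ i := by
  set e := Sum.elim β ζ with he
  have sq : ∀ z : ZMod 2, z * z = z := by decide
  -- values on generators
  have Tgen : ∀ (a : Fin s) (p q : Fin s ⊕ Fin k), Tform (β a) (e p) (e q) = 0 := by
    intro a p q
    have hβ : β a = e (Sum.inl a) := rfl
    rw [hβ]
    set P := Sum.inl a (α := Fin s) (β := Fin k) with hP
    by_cases hpq : p = q
    · subst hpq
      by_cases hPp : P = p
      · subst hPp
        have : Tform (e P) (e P) (e P) = ∑ i : Fin n, e P i := by
          unfold Tform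
          exact Finset.sum_congr rfl fun i _ => by rw [sq, sq]
        rw [this]
        exact h1 a
      · have : Tform (e P) (e p) (e p) = ∑ i : Fin n, e P i * e p i := by
          unfold Tform
          exact Finset.sum_congr rfl fun i _ => by rw [mul_assoc, sq]
        rw [this]
        exact h3 P p hPp
    · by_cases hPp : P = p
      · subst hPp
        have : Tform (e P) (e P) (e q) = ∑ i : Fin n, e P i * e q i := by
          unfold Tform
          exact Finset.sum_congr rfl fun i _ => by rw [sq]
        rw [this]
        exact h3 P q hpq
      · by_cases hPq : P = q
        · subst hPq
          have : Tform (e P) (e p) (e P) = ∑ i : Fin n, e P i * e p i := by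
            unfold Tform
            exact Finset.sum_congr rfl fun i _ => by rw [mul_right_comm, sq]
          rw [this]
          exact h3 P p hPp
        · exact h4 P p q hPp hPq hpq
  -- span set equals range of e
  have hrange : (Set.range β ∪ Set.range ζ) = Set.range e := by
    rw [he, Set.Sum.elim_range]
  -- T vanishes when first arg ∈ B, others ∈ Z
  have TB : ∀ b ∈ B, ∀ x ∈ Z, ∀ y ∈ Z, Tform b x y = 0 := by
    intro b hb x hx y hy
    rw [hB] at hb
    rw [hZ, hrange] at hx hy
    induction hb using Submodule.span_induction with
    | mem v hv =>
      obtain ⟨a, rfl⟩ := hv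
      induction hx using Submodule.span_induction with
      | mem u hu =>
        obtain ⟨p, rfl⟩ := hu
        induction hy using Submodule.span_induction with
        | mem w hw =>
          obtain ⟨q, rfl⟩ := hw
          exact Tgen a p q
        | zero => rw [Tform_swap13, Tform_zero_left]
        | add w w' hw hw' ih ih' =>
          rw [Tform_swap13, Tform_add_left, Tform_swap13 w, Tform_swap13 w', ih, ih', add_zero]
        | smul c w hw ih =>
          rw [Tform_swap13, Tform_smul_left, Tform_swap13, ih, mul_zero]
      | zero => rw [Tform_swap12, Tform_zero_left]
      | add u u' hu hu' ih ih' =>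
        rw [Tform_swap12, Tform_add_left, Tform_swap12 u, Tform_swap12 u', ih, ih', add_zero]
      | smul c u hu ih =>
        rw [Tform_swap12, Tform_smul_left, Tform_swap12, ih, mul_zero]
    | zero => exact Tform_zero_left _ _
    | add v v' hv hv' ih ih' => rw [Tform_add_left, ih, ih', add_zero]
    | smul c v hv ih => rw [Tform_smul_left, ih, mul_zero]
  have hBZ : B ≤ Z := by
    rw [hB, hZ]
    exact Submodule.span_mono Set.subset_union_left
  intro ζ₁ hζ₁ ζ₂ hζ₂ ζ₃ hζ₃ b₁ hb₁ b₂ hb₂ b₃ hb₃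
  have add2 : ∀ x y y' z : Fin n → ZMod 2,
      Tform x (y + y') z = Tform x y z + Tform x y' z := by
    intro x y y' z
    rw [Tform_swap12, Tform_add_left, Tform_swap12 y, Tform_swap12 y']
  have add3 : ∀ x y z z' : Fin n → ZMod 2,
      Tform x y (z + z') = Tform x y z + Tform x y z' := by
    intro x y z z'
    rw [Tform_swap13, Tform_add_left, Tform_swap13 z, Tform_swap13 z']
  have z1 := hζ₁; have z2 := hζ₂; have z3 := hζ₃
  have zb1 := hBZ hb₁; have zb2 := hBZ hb₂; have zb3 := hBZ hb₃
  have e1 : ∀ x ∈ Z, ∀ y ∈ Z, Tform b₁ x y = 0 := fun x hx y hy => TB b₁ hb₁ x hx y hy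
  have e2 : ∀ x ∈ Z, ∀ y ∈ Z, Tform x b₂ y = 0 := fun x hx y hy => by
    rw [Tform_swap12]; exact TB b₂ hb₂ x hx y hy
  have e3 : ∀ x ∈ Z, ∀ y ∈ Z, Tform x y b₃ = 0 := fun x hx y hy => by
    rw [Tform_swap13]; exact TB b₃ hb₃ y hy x hx
  have key : Tform (ζ₁ + b₁) (ζ₂ + b₂) (ζ₃ + b₃) = Tform ζ₁ ζ₂ ζ₃ := by
    rw [Tform_add_left, add2, add2, add3, add3, add3, add3]
    rw [e1 _ z2 _ z3, e1 _ z2 _ zb3, e1 _ zb2 _ z3, e1 _ zb2 _ zb3,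
      e2 _ z1 _ z3, e2 _ z1 _ zb3, e3 _ z1 _ z2]
    ring
  exact key
end

section
/- Let X be a t-dimensional cell poset, K a field of characteristic 2, and F a presheaf of K-vector spaces on X satisfying the sheaf axioms. Then for every cell σ ∈ X, the map ι_σ : F_σ → ∏_{τ ∈ X_{≥σ}(t)} F_τ sending c to (res_{σ,τ}(c))_{τ ∈ X_{≥σ}(t)} is injective. -/
/-- For a sheaf of `K`-vector spaces (char 2) on a `t`-dimensional
cell poset, the map `ι_σ : F_σ → ∏_{τ ∈ X_{≥σ}(t)} F_τ`, `c ↦ (res_{σ,τ} c)_τ`,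
is injective for every cell `σ`. -/
theorem sheaf_sections_injective
    {X : Type*} [Fintype X] [PartialOrder X] [DecidableEq X]
    [DecidableRel (· ≤ · : X → X → Prop)]
    (t : ℕ) (dim : X → ℕ)
    {K : Type*} [Field K] [CharP K 2]
    (hdim : ∀ σ : X, dim σ ≤ t)
    (hmono : ∀ σ τ : X, σ < τ → dim σ < dim τ)
    (hcovex : ∀ σ τ : X, σ < τ → ∃ π : X, (σ < π ∧ dim π = dim σ + 1) ∧ π ≤ τ)
    (htwo : ∀ σ ρ : X, σ < ρ → dim ρ = dim σ + 2 →
      {π : X | (σ < π ∧ dim π = dim σ + 1) ∧ (π < ρ ∧ dim ρ = dim π + 1)}.ncard = 2)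
    (F : X → Type*) [∀ σ, AddCommGroup (F σ)] [∀ σ, Module K (F σ)]
    [∀ σ, FiniteDimensional K (F σ)]
    (res : ∀ {σ τ : X}, σ ≤ τ → (F σ →ₗ[K] F τ))
    (hres_id : ∀ σ : X, res (le_refl σ) = LinearMap.id)
    (hres_comp : ∀ (σ π τ : X) (h1 : σ ≤ π) (h2 : π ≤ τ) (x : F σ),
      res h2 (res h1 x) = res (h1.trans h2) x)
    -- sheaf axioms for `dim σ ≤ t - 2`: exactness of
    -- `0 → F_σ → ∏_{π ∈ X_{≥σ}(dim σ + 1)} F_π → ∏_{ρ ∈ X_{≥σ}(dim σ + 2)} F_ρ`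
    (hsheaf_mid : ∀ σ : X, dim σ + 2 ≤ t →
      Function.Injective
        (fun (c : F σ) (π : {π : X // σ ≤ π ∧ dim π = dim σ + 1}) => res π.2.1 c) ∧
      ∀ c : (π : {π : X // σ ≤ π ∧ dim π = dim σ + 1}) → F π.1,
        (∀ ρ : {ρ : X // σ ≤ ρ ∧ dim ρ = dim σ + 2},
          (∑ π : {π : X // σ ≤ π ∧ dim π = dim σ + 1},
            if h : π.1 ≤ ρ.1 then res h (c π) else 0) = 0) →
        ∃ c₀ : F σ, ∀ π : {π : X // σ ≤ π ∧ dim π = dim σ + 1}, c π = res π.2.1 c₀)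
    -- sheaf axiom for `dim σ = t - 1`: injectivity into the top cells
    (hsheaf_top : ∀ σ : X, dim σ + 1 = t →
      Function.Injective
        (fun (c : F σ) (τ : {τ : X // σ ≤ τ ∧ dim τ = t}) => res τ.2.1 c)) :
    ∀ σ : X, Function.Injective
      (fun (c : F σ) (τ : {τ : X // σ ≤ τ ∧ dim τ = t}) => res τ.2.1 c) := by
  have htop : ∀ σ : X, dim σ = t → Function.Injective
      (fun (c : F σ) (τ : {τ : X // σ ≤ τ ∧ dim τ = t}) => res τ.2.1 c) := by
    intro σ h c1 c2 hc
    have h2 : res (le_refl σ) c1 = res (le_refl σ) c2 := congrFun hc ⟨σ, le_refl σ, h⟩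
    rwa [hres_id] at h2
  suffices H : ∀ n, ∀ σ : X, t - dim σ ≤ n → Function.Injective
      (fun (c : F σ) (τ : {τ : X // σ ≤ τ ∧ dim τ = t}) => res τ.2.1 c) by
    exact fun σ => H t σ (by omega)
  intro n
  induction n with
  | zero =>
    intro σ hσ
    exact htop σ (by have := hdim σ; omega)
  | succ n ih =>
    intro σ hσ
    have hd := hdim σ
    rcases Nat.lt_or_ge (dim σ + 1) t with hlt | hge
    · -- dim σ + 2 ≤ t
      intro c1 c2 hc
      apply (hsheaf_mid σ (by omega)).1
      funext π
      apply ih π.1 (by have := π.2.2; omega)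
      funext τ
      have h1 : σ ≤ τ.1 := π.2.1.trans τ.2.1
      have key : res h1 c1 = res h1 c2 := congrFun hc ⟨τ.1, h1, τ.2.2⟩
      show res τ.2.1 (res π.2.1 c1) = res τ.2.1 (res π.2.1 c2)
      rw [hres_comp σ π.1 τ.1 π.2.1 τ.2.1 c1, hres_comp σ π.1 τ.1 π.2.1 τ.2.1 c2]
      exact key
    · rcases Nat.lt_or_ge (dim σ) t with h2 | h2
      · exact hsheaf_top σ (by omega)
      · exact htop σ (by omega)
end

section
/- Let X be a t-dimensional cell poset, K a field of characteristic 2, and F a presheaf of K-vector spaces on X satisfying the sheaf axioms. Then for every cell σ ∈ X with dim σ < t, the image of the map ι_σ : F_σ → ∏_{τ ∈ X_{≥σ}(t)} F_τ, c ↦ (res_{σ,τ}(c))_τ, equals the subspace {c ∈ ∏_{τ ∈ X_{≥σ}(t)} F_τ : for every σ' ∈ X_{≥σ}(t−1), the tuple (c_τ)_{τ ∈ X_{≥σ'}(t)} lies in the image of ι_{σ'}}. -/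
/-- For a sheaf of `K`-vector spaces (char 2) on a `t`-dimensional
cell poset, for every cell `σ` with `dim σ < t`, the image of
`ι_σ : F_σ → ∏_{τ ∈ X_{≥σ}(t)} F_τ` consists exactly of the tuples whose restriction
above every `(t−1)`-cell `σ' ≥ σ` lies in the image of `ι_{σ'}`. -/
theorem sheaf_sections_image_characterization
    {X : Type*} [Fintype X] [PartialOrder X] [DecidableEq X]
    [DecidableRel (· ≤ · : X → X → Prop)]
    (t : ℕ) (dim : X → ℕ)
    {K : Type*} [Field K] [CharP K 2]
    (hdim : ∀ σ : X, dim σ ≤ t)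
    (hmono : ∀ σ τ : X, σ < τ → dim σ < dim τ)
    (hcovex : ∀ σ τ : X, σ < τ → ∃ π : X, (σ < π ∧ dim π = dim σ + 1) ∧ π ≤ τ)
    (htwo : ∀ σ ρ : X, σ < ρ → dim ρ = dim σ + 2 →
      {π : X | (σ < π ∧ dim π = dim σ + 1) ∧ (π < ρ ∧ dim ρ = dim π + 1)}.ncard = 2)
    (F : X → Type*) [∀ σ, AddCommGroup (F σ)] [∀ σ, Module K (F σ)]
    [∀ σ, FiniteDimensional K (F σ)]
    (res : ∀ {σ τ : X}, σ ≤ τ → (F σ →ₗ[K] F τ))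
    (hres_id : ∀ σ : X, res (le_refl σ) = LinearMap.id)
    (hres_comp : ∀ (σ π τ : X) (h1 : σ ≤ π) (h2 : π ≤ τ) (x : F σ),
      res h2 (res h1 x) = res (h1.trans h2) x)
    (hsheaf_mid : ∀ σ : X, dim σ + 2 ≤ t →
      Function.Injective
        (fun (c : F σ) (π : {π : X // σ ≤ π ∧ dim π = dim σ + 1}) => res π.2.1 c) ∧
      ∀ c : (π : {π : X // σ ≤ π ∧ dim π = dim σ + 1}) → F π.1,
        (∀ ρ : {ρ : X // σ ≤ ρ ∧ dim ρ = dim σ + 2},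
          (∑ π : {π : X // σ ≤ π ∧ dim π = dim σ + 1},
            if h : π.1 ≤ ρ.1 then res h (c π) else 0) = 0) →
        ∃ c₀ : F σ, ∀ π : {π : X // σ ≤ π ∧ dim π = dim σ + 1}, c π = res π.2.1 c₀)
    (hsheaf_top : ∀ σ : X, dim σ + 1 = t →
      Function.Injective
        (fun (c : F σ) (τ : {τ : X // σ ≤ τ ∧ dim τ = t}) => res τ.2.1 c)) :
    ∀ σ : X, dim σ < t →
      Set.range (fun (c : F σ) (τ : {τ : X // σ ≤ τ ∧ dim τ = t}) => res τ.2.1 c) =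
      {c : (τ : {τ : X // σ ≤ τ ∧ dim τ = t}) → F τ.1 |
        ∀ (σ' : X) (h' : σ ≤ σ'), dim σ' + 1 = t →
          (fun τ' : {τ : X // σ' ≤ τ ∧ dim τ = t} => c ⟨τ'.1, h'.trans τ'.2.1, τ'.2.2⟩)
            ∈ Set.range
              (fun (d : F σ') (τ' : {τ : X // σ' ≤ τ ∧ dim τ = t}) => res τ'.2.1 d)} := by

  classical
  -- Injectivity of the map to top cells, for every cell.
  have inj : ∀ n : ℕ, ∀ ρ : X, t - dim ρ ≤ n → ∀ x : F ρ,
      (∀ (τ : X) (h : ρ ≤ τ), dim τ = t → res h x = 0) → x = 0 := by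
    intro n
    induction n with
    | zero =>
      intro ρ hn x hx
      have hρ : dim ρ = t := le_antisymm (hdim ρ) (by omega)
      have := hx ρ le_rfl hρ
      rwa [hres_id, LinearMap.id_apply] at this
    | succ n ih =>
      intro ρ hn x hx
      by_cases hρt : dim ρ = t
      · have := hx ρ le_rfl hρt
        rwa [hres_id, LinearMap.id_apply] at this
      · have hρlt : dim ρ < t := lt_of_le_of_ne (hdim ρ) hρt
        by_cases htop : dim ρ + 1 = t
        · apply hsheaf_top ρ htop
          funext τ
          show res τ.2.1 x = res τ.2.1 (0 : F ρ)
          rw [map_zero]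
          exact hx τ.1 τ.2.1 τ.2.2
        · have hmid : dim ρ + 2 ≤ t := by omega
          have h1 : ∀ π : {π : X // ρ ≤ π ∧ dim π = dim ρ + 1}, res π.2.1 x = 0 := by
            intro π
            apply ih π.1 (by have := π.2.2; omega)
            intro τ h ht
            rw [hres_comp]
            exact hx τ _ ht
          apply (hsheaf_mid ρ hmid).1
          funext π
          show res π.2.1 x = res π.2.1 (0 : F ρ)
          rw [map_zero]
          exact h1 π
  -- Main induction.
  have main : ∀ n : ℕ, ∀ σ : X, t - dim σ ≤ n → dim σ < t →
      ∀ c : (τ : {τ : X // σ ≤ τ ∧ dim τ = t}) → F τ.1,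
        (∀ (σ' : X) (h' : σ ≤ σ'), dim σ' + 1 = t →
          ∃ dd : F σ', ∀ τ' : {τ : X // σ' ≤ τ ∧ dim τ = t},
            res τ'.2.1 dd = c ⟨τ'.1, h'.trans τ'.2.1, τ'.2.2⟩) →
        ∃ c₀ : F σ, ∀ τ : {τ : X // σ ≤ τ ∧ dim τ = t}, c τ = res τ.2.1 c₀ := by
    intro n
    induction n with
    | zero => intro σ hn hσ; omega
    | succ n ih =>
      intro σ hn hσ c hc
      by_cases htop : dim σ + 1 = t
      · obtain ⟨dd, hdd⟩ := hc σ le_rfl htop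
        exact ⟨dd, fun τ => (hdd τ).symm⟩
      · have hmid : dim σ + 2 ≤ t := by omega
        have hd : ∀ π : {π : X // σ ≤ π ∧ dim π = dim σ + 1},
            ∃ dπ : F π.1, ∀ τ : {τ : X // π.1 ≤ τ ∧ dim τ = t},
              c ⟨τ.1, π.2.1.trans τ.2.1, τ.2.2⟩ = res τ.2.1 dπ := by
          intro π
          have hπt : dim π.1 < t := by have := π.2.2; omega
          obtain ⟨dπ, hdπ⟩ := ih π.1 (by have := π.2.2; omega) hπt
            (fun τ => c ⟨τ.1, π.2.1.trans τ.2.1, τ.2.2⟩)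
            (fun σ' h' ht => hc σ' (π.2.1.trans h') ht)
          exact ⟨dπ, hdπ⟩
        choose d hdp using hd
        -- all restrictions of the d's into a 2-step-up cell agree
        have key : ∀ ρ : {ρ : X // σ ≤ ρ ∧ dim ρ = dim σ + 2},
            ∀ π π' : {π : X // σ ≤ π ∧ dim π = dim σ + 1},
            ∀ (h : π.1 ≤ ρ.1) (h' : π'.1 ≤ ρ.1),
            res h (d π) = res h' (d π') := by
          intro ρ π π' h h'
          have hz : res h (d π) - res h' (d π') = 0 := by
            apply inj (t - dim ρ.1) ρ.1 le_rfl
            intro τ hτ ht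
            rw [map_sub, hres_comp, hres_comp]
            have e1 := hdp π ⟨τ, h.trans hτ, ht⟩
            have e2 := hdp π' ⟨τ, h'.trans hτ, ht⟩
            rw [← e1, ← e2]
            exact sub_self _
          exact sub_eq_zero.mp hz
        have hsumzero : ∀ ρ : {ρ : X // σ ≤ ρ ∧ dim ρ = dim σ + 2},
            (∑ π : {π : X // σ ≤ π ∧ dim π = dim σ + 1},
              if h : π.1 ≤ ρ.1 then res h (d π) else 0) = 0 := by
          intro ρ
          have hσρ : σ < ρ.1 := lt_of_le_of_ne ρ.2.1 (by
            intro e; have := ρ.2.2; rw [← e] at this; omega)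
          have h2 := htwo σ ρ.1 hσρ ρ.2.2
          set S : Finset {π : X // σ ≤ π ∧ dim π = dim σ + 1} :=
            Finset.univ.filter (fun π => π.1 ≤ ρ.1) with hS
          have hset : {π : X | (σ < π ∧ dim π = dim σ + 1) ∧ (π < ρ.1 ∧ dim ρ.1 = dim π + 1)}
              = ↑(Finset.univ.filter
                  (fun π : X => (σ < π ∧ dim π = dim σ + 1) ∧ (π < ρ.1 ∧ dim ρ.1 = dim π + 1))) := by
            ext x; simp
          rw [hset, Set.ncard_coe_finset] at h2
          have hcard : S.card = 2 := by
            rw [← h2]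
            apply Finset.card_bij (fun π _ => π.1)
            · intro π hπ
              have hπρ : π.1 ≤ ρ.1 := (Finset.mem_filter.mp hπ).2
              have hd1 := π.2.2
              have hd2 := ρ.2.2
              simp only [Finset.mem_filter, Finset.mem_univ, true_and]
              refine ⟨⟨lt_of_le_of_ne π.2.1 ?_, hd1⟩, lt_of_le_of_ne hπρ ?_, by omega⟩
              · intro e; rw [← e] at hd1; omega
              · intro e; rw [e] at hd1; omega
            · intro a _ b _ hab; exact Subtype.ext hab
            · intro b hb
              simp only [Finset.mem_filter, Finset.mem_univ, true_and] at hb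
              exact ⟨⟨b, le_of_lt hb.1.1, hb.1.2⟩,
                Finset.mem_filter.mpr ⟨Finset.mem_univ _, le_of_lt hb.2.1⟩, rfl⟩
          have hne : S.Nonempty := Finset.card_pos.mp (by rw [hcard]; norm_num)
          obtain ⟨π₀, hπ₀⟩ := hne
          have h₀ : π₀.1 ≤ ρ.1 := (Finset.mem_filter.mp hπ₀).2
          set v : F ρ.1 := res h₀ (d π₀) with hv
          calc (∑ π : {π : X // σ ≤ π ∧ dim π = dim σ + 1},
                  if h : π.1 ≤ ρ.1 then res h (d π) else 0)
              = ∑ π : {π : X // σ ≤ π ∧ dim π = dim σ + 1},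
                  (if π.1 ≤ ρ.1 then v else 0) := by
                apply Finset.sum_congr rfl
                intro π _
                by_cases hh : π.1 ≤ ρ.1
                · rw [dif_pos hh, if_pos hh]
                  exact key ρ π π₀ hh h₀
                · rw [dif_neg hh, if_neg hh]
            _ = ∑ _π ∈ S, v := (Finset.sum_filter _ _).symm
            _ = S.card • v := Finset.sum_const v
            _ = v + v := by rw [hcard, two_nsmul]
            _ = 0 := by
                have h2K : (2 : K) = 0 := by
                  exact_mod_cast CharP.cast_eq_zero K 2
                rw [← two_smul K v, h2K, zero_smul]
        obtain ⟨c₀, hc₀⟩ := (hsheaf_mid σ hmid).2 d hsumzero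
        refine ⟨c₀, fun τ => ?_⟩
        have hστ : σ < τ.1 := lt_of_le_of_ne τ.2.1 (by
          intro e; have := τ.2.2; rw [← e] at this; omega)
        obtain ⟨π, ⟨hσπ, hπdim⟩, hπτ⟩ := hcovex σ τ.1 hστ
        have hthis := hdp ⟨π, le_of_lt hσπ, hπdim⟩ ⟨τ.1, hπτ, τ.2.2⟩
        rw [hc₀ ⟨π, le_of_lt hσπ, hπdim⟩, hres_comp] at hthis
        exact hthis
  intro σ hσ
  ext c
  simp only [Set.mem_range, Set.mem_setOf_eq]
  constructor
  · rintro ⟨c₀, rfl⟩ σ' h' ht'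
    refine ⟨res h' c₀, funext fun τ' => ?_⟩
    exact hres_comp σ σ' τ'.1 h' τ'.2.1 c₀
  · intro hc
    have hc' : ∀ (σ' : X) (h' : σ ≤ σ'), dim σ' + 1 = t →
        ∃ dd : F σ', ∀ τ' : {τ : X // σ' ≤ τ ∧ dim τ = t},
          res τ'.2.1 dd = c ⟨τ'.1, h'.trans τ'.2.1, τ'.2.2⟩ := by
      intro σ' h' ht
      obtain ⟨dd, hdd⟩ := hc σ' h' ht
      exact ⟨dd, fun τ' => congrFun hdd τ'⟩
    obtain ⟨c₀, h0⟩ := main (t - dim σ) σ le_rfl hσ c hc'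
    exact ⟨c₀, funext fun τ => (h0 τ).symm⟩
end

section
/- Let X be a t-dimensional cell poset over a field K of characteristic 2 such that every 1-cell has exactly two 0-cells below it and, for every cell τ, the set of 0-cells below τ is nonempty and connected in the graph joining two 0-cells that lie below a common 1-cell below τ. Let F be the Tanner sheaf associated with local codes {C_σ}_{σ ∈ X(t−1)} and F^⊥ its dual sheaf. Then the subspace S = {α : X(t) → K : for every σ ∈ X(t−1), the tuple (α(τ))_{τ ∈ X_{≥σ}(t)} lies in C_σ^⊥} equals the orthogonal complement of the image of δ^{t−1} : C^{t−1}(X,F) → C^t(X,F) ≅ (X(t) → K) with respect to the standard bilinear form ⟨α,α'⟩ = Σ_{τ ∈ X(t)} α(τ)·α'(τ), and S is K-linearly isomorphic to the kernel of δ⁰ : C⁰(X,F^⊥) → C¹(X,F^⊥). Consequently H_t(X,F) ≅ H⁰(X,F^⊥). -/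
set_option linter.unusedSectionVars false

namespace Stmt9

variable {X : Type*} [Fintype X] [PartialOrder X] [DecidableEq X]
  [DecidableRel (· ≤ · : X → X → Prop)]
variable {K : Type*} [Field K]

/-- `X_{≥σ}(k)`: the `k`-cells lying above `σ`. -/
abbrev UpSet (dim : X → ℕ) (σ : X) (k : ℕ) : Type _ :=
  {τ : X // σ ≤ τ ∧ dim τ = k}

/-- The dual (orthogonal complement) of a set of words, w.r.t. the standard
bilinear form `⟨d,c⟩ = Σ_x d(x)·c(x)`. -/
def dualSet {ι : Type*} [Fintype ι] (C : Set (ι → K)) : Set (ι → K) :=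
  {d | ∀ c ∈ C, ∑ x, d x * c x = 0}

/-- Membership in the Tanner sheaf `F` over the cell `σ`, for the family of local
codes `Cc` on `X(t−1)`: the restriction of `c` above every `(t−1)`-cell `σ' ≥ σ`
lies in `Cc σ'`. -/
def MemF (dim : X → ℕ) (t : ℕ)
    (Cc : (σ' : X) → dim σ' + 1 = t → Set (UpSet dim σ' t → K))
    (σ : X) (c : UpSet dim σ t → K) : Prop :=
  ∀ (σ' : X) (h : σ ≤ σ') (h' : dim σ' + 1 = t),
    (fun τ' : UpSet dim σ' t => c ⟨τ'.1, h.trans τ'.2.1, τ'.2.2⟩) ∈ Cc σ' h'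

end Stmt9

section AuxHelpers

variable {X : Type*} [Fintype X] [PartialOrder X] [DecidableEq X]
  [DecidableRel (· ≤ · : X → X → Prop)]

/-- Summing a function supported on the up-set of `σ` over all `t`-cells equals the
sum over the up-set. -/
lemma aux_sum_dite_upset {K : Type*} [AddCommMonoid K] (t : ℕ) (dim : X → ℕ) (σ : X)
    (f : {τ : X // σ ≤ τ ∧ dim τ = t} → K) :
    ∑ τ : {τ : X // dim τ = t}, (if h : σ ≤ τ.1 then f ⟨τ.1, h, τ.2⟩ else 0)
      = ∑ τ' : {τ : X // σ ≤ τ ∧ dim τ = t}, f τ' := by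
  classical
  rw [← Finset.sum_subset
    (Finset.filter_subset (fun τ : {τ : X // dim τ = t} => σ ≤ τ.1) Finset.univ)
    (by intro x _ hx; rw [dif_neg]; simpa using hx)]
  refine Finset.sum_bij'
    (fun a ha => (⟨a.1, by simpa using ha, a.2⟩ : {τ : X // σ ≤ τ ∧ dim τ = t}))
    (fun b _ => ⟨b.1, b.2.2⟩) ?_ ?_ ?_ ?_ ?_
  · intro a ha; exact Finset.mem_univ _
  · intro b _; simp [b.2.1]
  · intro a ha; rfl
  · intro b hb; rfl
  · intro a ha; rw [dif_pos (by simpa using ha)]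

/-- Summing, over all `0`-cells, a function supported on the (two-element) set of
`0`-cells below `ρ`, yields the sum of the two values. -/
lemma aux_sum_pair_of_set_eq {K : Type*} [AddCommMonoid K] (dim : X → ℕ) (ρ y z : X)
    (hy0 : dim y = 0) (hz0 : dim z = 0) (hne : y ≠ z)
    (hs : {x : X | x ≤ ρ ∧ dim x = 0} = {y, z})
    (g : {π : X // dim π = 0} → K) (hg : ∀ π₀, ¬ π₀.1 ≤ ρ → g π₀ = 0) :
    ∑ π₀ : {π : X // dim π = 0}, g π₀ = g ⟨y, hy0⟩ + g ⟨z, hz0⟩ := by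
  classical
  rw [← Finset.sum_subset
    (Finset.filter_subset (fun π₀ : {π : X // dim π = 0} => π₀.1 ≤ ρ) Finset.univ)
    (by intro x _ hx; exact hg x (by simpa using hx))]
  have hfe : Finset.filter (fun π₀ : {π : X // dim π = 0} => π₀.1 ≤ ρ) Finset.univ
      = {(⟨y, hy0⟩ : {π : X // dim π = 0}), ⟨z, hz0⟩} := by
    ext π₀
    simp only [Finset.mem_filter, Finset.mem_univ, true_and, Finset.mem_insert,
      Finset.mem_singleton]
    constructor
    · intro h
      have : π₀.1 ∈ ({y, z} : Set X) := hs ▸ ⟨h, π₀.2⟩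
      rcases this with h | h
      · exact Or.inl (Subtype.ext h)
      · exact Or.inr (Subtype.ext h)
    · rintro (rfl | rfl)
      · have : y ∈ {x : X | x ≤ ρ ∧ dim x = 0} := hs.symm ▸ (by simp : y ∈ ({y,z} : Set X))
        exact this.1
      · have : z ∈ {x : X | x ≤ ρ ∧ dim x = 0} := hs.symm ▸ (by simp : z ∈ ({y,z} : Set X))
        exact this.1
  rw [hfe, Finset.sum_pair (by simpa [Subtype.ext_iff] using hne)]

/-- In a `0`-cochain of the dual sheaf lying in `ker δ⁰`, the value at a top cell `τ`
does not depend on the choice of the `0`-cell below `τ` (by connectivity). -/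
lemma aux_key_const {K : Type*} [Field K] [CharP K 2] (t : ℕ) (dim : X → ℕ)
    (htwo0 : ∀ ρ : X, dim ρ = 1 → {π : X | π ≤ ρ ∧ dim π = 0}.ncard = 2)
    (hconn : ∀ τ a b : X, a ≤ τ → dim a = 0 → b ≤ τ → dim b = 0 →
      Relation.ReflTransGen
        (fun x y : X => dim x = 0 ∧ dim y = 0 ∧
          ∃ ρ : X, ρ ≤ τ ∧ dim ρ = 1 ∧ x ≤ ρ ∧ y ≤ ρ) a b)
    (β : (π : {π : X // dim π = 0}) → ({τ : X // π.1 ≤ τ ∧ dim τ = t} → K))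
    (hβ2 : ∀ ρ : X, dim ρ = 1 → ∀ τ : {τ : X // ρ ≤ τ ∧ dim τ = t},
        (∑ π : {π : X // dim π = 0},
          if h : π.1 ≤ ρ then β π ⟨τ.1, h.trans τ.2.1, τ.2.2⟩ else 0) = 0)
    (τ : X) (hτ : dim τ = t) (a b : X) (ha : a ≤ τ) (ha0 : dim a = 0)
    (hb : b ≤ τ) (hb0 : dim b = 0) :
    β ⟨a, ha0⟩ ⟨τ, ha, hτ⟩ = β ⟨b, hb0⟩ ⟨τ, hb, hτ⟩ := by
  classical
  have H := hconn τ a b ha ha0 hb hb0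
  clear hconn
  revert hb hb0
  induction H with
  | refl => intro hb hb0; rfl
  | @tail c d hac hcd ih =>
    intro hd hd0
    obtain ⟨hc0, hd0', ρ, hρτ, hρ1, hcρ, hdρ⟩ := hcd
    have hcτ : c ≤ τ := hcρ.trans hρτ
    have step : β ⟨c, hc0⟩ ⟨τ, hcτ, hτ⟩ = β ⟨d, hd0⟩ ⟨τ, hd, hτ⟩ := by
      by_cases hcd_eq : c = d
      · subst hcd_eq; rfl
      · have hsub : ({c, d} : Set X) ⊆ {x : X | x ≤ ρ ∧ dim x = 0} := by
          rintro x (rfl | rfl)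
          · exact ⟨hcρ, hc0⟩
          · exact ⟨hdρ, hd0⟩
        have hset : ({c, d} : Set X) = {x : X | x ≤ ρ ∧ dim x = 0} :=
          Set.eq_of_subset_of_ncard_le hsub
            (by rw [htwo0 ρ hρ1, Set.ncard_pair hcd_eq]) (Set.toFinite _)
        have hsum := hβ2 ρ hρ1 ⟨τ, hρτ, hτ⟩
        rw [aux_sum_pair_of_set_eq dim ρ c d hc0 hd0 hcd_eq hset.symm
          (fun π₀ => if h : π₀.1 ≤ ρ then β π₀ ⟨τ, h.trans hρτ, hτ⟩ else 0)
          (fun π₀ h => dif_neg h)] at hsum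
        rw [dif_pos hcρ, dif_pos hdρ] at hsum
        have := eq_neg_of_add_eq_zero_left hsum
        rwa [CharTwo.neg_eq] at this
    exact (ih hcτ hc0).trans step

end AuxHelpers

open Stmt9 in
/-- For a Tanner sheaf `F` with local codes `{C_σ}` on a `t`-dimensional
cell poset (with connected, nonempty vertex sets below every cell and exactly two vertices
below every edge), the space `S` of global sections of the dual sheaf `F^⊥` equals the
orthogonal complement of `im δ^{t−1} ⊆ C^t(X,F) ≅ (X(t) → K)`, and `S` is `K`-linearly
isomorphic to `ker δ⁰ ⊆ C⁰(X,F^⊥)`.  Consequently `H_t(X,F) ≅ H⁰(X,F^⊥)`. -/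
theorem top_homology_iso_zero_cohomology
    {X : Type*} [Fintype X] [PartialOrder X] [DecidableEq X]
    [DecidableRel (· ≤ · : X → X → Prop)]
    (t : ℕ) (dim : X → ℕ)
    {K : Type*} [Field K] [CharP K 2]
    (hdim : ∀ σ : X, dim σ ≤ t)
    (hmono : ∀ σ τ : X, σ < τ → dim σ < dim τ)
    (hcovex : ∀ σ τ : X, σ < τ → ∃ π : X, (σ < π ∧ dim π = dim σ + 1) ∧ π ≤ τ)
    (htwo : ∀ σ ρ : X, σ < ρ → dim ρ = dim σ + 2 →
      {π : X | (σ < π ∧ dim π = dim σ + 1) ∧ (π < ρ ∧ dim ρ = dim π + 1)}.ncard = 2)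
    -- every 1-cell has exactly two 0-cells below it
    (htwo0 : ∀ ρ : X, dim ρ = 1 → {π : X | π ≤ ρ ∧ dim π = 0}.ncard = 2)
    -- the 0-cells below any cell form a nonempty set…
    (h0ne : ∀ τ : X, ∃ π : X, π ≤ τ ∧ dim π = 0)
    -- …which is connected via common 1-cells below the cell
    (hconn : ∀ τ a b : X, a ≤ τ → dim a = 0 → b ≤ τ → dim b = 0 →
      Relation.ReflTransGen
        (fun x y : X => dim x = 0 ∧ dim y = 0 ∧
          ∃ ρ : X, ρ ≤ τ ∧ dim ρ = 1 ∧ x ≤ ρ ∧ y ≤ ρ) a b)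
    -- the local codes
    (Cc : (σ : X) → dim σ + 1 = t → Submodule K (UpSet dim σ t → K))
    -- `S`: global sections of the dual sheaf `F^⊥`
    (S : Set ({τ : X // dim τ = t} → K))
    (hS : S = {α | ∀ (σ : X) (h' : dim σ + 1 = t),
      (fun τ' : UpSet dim σ t => α ⟨τ'.1, τ'.2.2⟩) ∈
        dualSet ((Cc σ h' : Set (UpSet dim σ t → K)))})
    -- `OrthIm`: the orthogonal complement of `im δ^{t−1} ⊆ C^t(X,F) ≅ (X(t) → K)`,
    -- i.e. `ker ∂_t = H_t(X,F)`
    (OrthIm : Set ({τ : X // dim τ = t} → K))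
    (hOrthIm : OrthIm = {α |
      ∀ β : (σ : {σ : X // dim σ + 1 = t}) → (UpSet dim σ.1 t → K),
        (∀ σ, MemF dim t (fun σ' h' => (Cc σ' h' : Set (UpSet dim σ' t → K))) σ.1 (β σ)) →
        ∑ τ : {τ : X // dim τ = t}, α τ *
          (∑ σ : {σ : X // dim σ + 1 = t},
            if h : σ.1 ≤ τ.1 then β σ ⟨τ.1, h, τ.2⟩ else 0) = 0})
    -- `Ker0 = ker δ⁰ = H⁰(X,F^⊥)`
    (Ker0 : Set ((π : {π : X // dim π = 0}) → (UpSet dim π.1 t → K)))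
    (hKer0 : Ker0 = {β |
      (∀ π : {π : X // dim π = 0},
        MemF dim t (fun σ' h' => dualSet ((Cc σ' h' : Set (UpSet dim σ' t → K)))) π.1 (β π)) ∧
      ∀ ρ : X, dim ρ = 1 → ∀ τ : UpSet dim ρ t,
        (∑ π : {π : X // dim π = 0},
          if h : π.1 ≤ ρ then β π ⟨τ.1, h.trans τ.2.1, τ.2.2⟩ else 0) = 0}) :
    S = OrthIm ∧
    (∃ φ : ({τ : X // dim τ = t} → K) →
        ((π : {π : X // dim π = 0}) → (UpSet dim π.1 t → K)),
      Set.BijOn φ S Ker0 ∧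
      (∀ a ∈ S, ∀ b ∈ S, φ (a + b) = φ a + φ b) ∧
      (∀ (k : K), ∀ a ∈ S, φ (k • a) = k • φ a)) ∧
    (∃ φ : ({τ : X // dim τ = t} → K) →
        ((π : {π : X // dim π = 0}) → (UpSet dim π.1 t → K)),
      Set.BijOn φ OrthIm Ker0 ∧
      (∀ a ∈ OrthIm, ∀ b ∈ OrthIm, φ (a + b) = φ a + φ b) ∧
      (∀ (k : K), ∀ a ∈ OrthIm, φ (k • a) = k • φ a)) := by
  classical
  subst hS hOrthIm hKer0
  -- Part 1: S = OrthIm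
  have hSO : {α : {τ : X // dim τ = t} → K | ∀ (σ : X) (h' : dim σ + 1 = t),
      (fun τ' : UpSet dim σ t => α ⟨τ'.1, τ'.2.2⟩) ∈
        dualSet ((Cc σ h' : Set (UpSet dim σ t → K)))} = {α |
      ∀ β : (σ : {σ : X // dim σ + 1 = t}) → (UpSet dim σ.1 t → K),
        (∀ σ, MemF dim t (fun σ' h' => (Cc σ' h' : Set (UpSet dim σ' t → K))) σ.1 (β σ)) →
        ∑ τ : {τ : X // dim τ = t}, α τ *
          (∑ σ : {σ : X // dim σ + 1 = t},
            if h : σ.1 ≤ τ.1 then β σ ⟨τ.1, h, τ.2⟩ else 0) = 0} := by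
    ext α
    simp only [Set.mem_setOf_eq]
    constructor
    · -- S ⊆ OrthIm
      intro hα β hβ
      calc ∑ τ : {τ : X // dim τ = t}, α τ *
              (∑ σ : {σ : X // dim σ + 1 = t},
                if h : σ.1 ≤ τ.1 then β σ ⟨τ.1, h, τ.2⟩ else 0)
          = ∑ τ : {τ : X // dim τ = t}, ∑ σ : {σ : X // dim σ + 1 = t},
              (if h : σ.1 ≤ τ.1 then α τ * β σ ⟨τ.1, h, τ.2⟩ else 0) := by
            refine Finset.sum_congr rfl fun τ _ => ?_
            rw [Finset.mul_sum]
            refine Finset.sum_congr rfl fun σ _ => ?_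
            rw [mul_dite]
            split <;> simp
        _ = ∑ σ : {σ : X // dim σ + 1 = t}, ∑ τ : {τ : X // dim τ = t},
              (if h : σ.1 ≤ τ.1 then α τ * β σ ⟨τ.1, h, τ.2⟩ else 0) := Finset.sum_comm
        _ = 0 := by
            refine Finset.sum_eq_zero fun σ _ => ?_
            have heq : ∑ τ : {τ : X // dim τ = t},
                (if h : σ.1 ≤ τ.1 then α τ * β σ ⟨τ.1, h, τ.2⟩ else 0)
                = ∑ τ' : UpSet dim σ.1 t, α ⟨τ'.1, τ'.2.2⟩ * β σ τ' :=
              aux_sum_dite_upset t dim σ.1 (fun τ' => α ⟨τ'.1, τ'.2.2⟩ * β σ τ')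
            rw [heq]
            exact hα σ.1 σ.2 (β σ) (hβ σ σ.1 le_rfl σ.2)
    · -- OrthIm ⊆ S
      intro hα σ₀ h₀
      intro c hc
      -- the single-cell cochain supported on σ₀ with value c
      set β : (σ : {σ : X // dim σ + 1 = t}) → (UpSet dim σ.1 t → K) :=
        fun σ τ' => if h : σ.1 = σ₀ then c ⟨τ'.1, h ▸ τ'.2.1, τ'.2.2⟩ else 0 with hβdef
      have hβmem : ∀ σ, MemF dim t
          (fun σ' h' => (Cc σ' h' : Set (UpSet dim σ' t → K))) σ.1 (β σ) := by
        intro σ σ' hle h''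
        have hEq : σ' = σ.1 := by
          rcases lt_or_eq_of_le hle with hlt | hEq
          · exact absurd (hmono _ _ hlt) (by omega)
          · exact hEq.symm
        subst hEq
        by_cases hσ : σ.1 = σ₀
        · subst hσ
          have : (fun τ' : UpSet dim σ.1 t => β σ ⟨τ'.1, hle.trans τ'.2.1, τ'.2.2⟩)
              = c := by
            funext τ'
            simp only [hβdef, dif_pos rfl]
          rw [this]
          exact hc
        · have : (fun τ' : UpSet dim σ.1 t => β σ ⟨τ'.1, hle.trans τ'.2.1, τ'.2.2⟩)
              = 0 := by
            funext τ'
            simp only [hβdef, dif_neg hσ, Pi.zero_apply]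
          rw [this]
          exact (Cc σ.1 h'').zero_mem
      have hsum := hα β hβmem
      have hinner : ∀ τ : {τ : X // dim τ = t},
          (∑ σ : {σ : X // dim σ + 1 = t},
            if h : σ.1 ≤ τ.1 then β σ ⟨τ.1, h, τ.2⟩ else 0)
          = (if h : σ₀ ≤ τ.1 then c ⟨τ.1, h, τ.2⟩ else 0) := by
        intro τ
        rw [Finset.sum_eq_single (⟨σ₀, h₀⟩ : {σ : X // dim σ + 1 = t})]
        · split
          · next h => simp only [hβdef, dif_pos rfl]
          · rfl
        · intro σ _ hne
          have hσ : σ.1 ≠ σ₀ := fun h => hne (Subtype.ext h)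
          split
          · next h => simp only [hβdef, dif_neg hσ]
          · rfl
        · intro h; exact absurd (Finset.mem_univ _) h
      rw [Finset.sum_congr rfl (fun τ _ => by rw [hinner τ])] at hsum
      have heq : ∑ τ : {τ : X // dim τ = t},
          α τ * (if h : σ₀ ≤ τ.1 then c ⟨τ.1, h, τ.2⟩ else 0)
          = ∑ τ' : UpSet dim σ₀ t, α ⟨τ'.1, τ'.2.2⟩ * c τ' := by
        rw [← aux_sum_dite_upset t dim σ₀ (fun τ' => α ⟨τ'.1, τ'.2.2⟩ * c τ')]
        refine Finset.sum_congr rfl fun τ _ => ?_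
        rw [mul_dite]
        split <;> simp
      rw [heq] at hsum
      exact hsum
  refine ⟨hSO, ?_, ?_⟩
  on_goal 2 => rw [← hSO]
  all_goals
  · -- the restriction map φ
    refine ⟨fun α π τ' => α ⟨τ'.1, τ'.2.2⟩, ⟨?_, ?_, ?_⟩, fun a _ b _ => rfl,
      fun k a _ => rfl⟩
    · -- MapsTo
      intro α hα
      simp only [Set.mem_setOf_eq] at hα ⊢
      constructor
      · intro π σ' hle h''
        exact hα σ' h''
      · intro ρ hρ1 τ
        obtain ⟨y, z, hyz, hset⟩ := Set.ncard_eq_two.mp (htwo0 ρ hρ1)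
        have hy : y ∈ {x : X | x ≤ ρ ∧ dim x = 0} :=
          hset.symm ▸ (by simp : y ∈ ({y, z} : Set X))
        have hz : z ∈ {x : X | x ≤ ρ ∧ dim x = 0} :=
          hset.symm ▸ (by simp : z ∈ ({y, z} : Set X))
        rw [aux_sum_pair_of_set_eq dim ρ y z hy.2 hz.2 hyz hset
          (fun π₀ => if h : π₀.1 ≤ ρ then α ⟨τ.1, τ.2.2⟩ else 0)
          (fun π₀ h => dif_neg h)]
        rw [dif_pos hy.1, dif_pos hz.1]
        exact CharTwo.add_self_eq_zero _
    · -- InjOn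
      intro a _ b _ h
      funext τ
      obtain ⟨π, hπ, hπ0⟩ := h0ne τ.1
      exact congrFun (congrFun h ⟨π, hπ0⟩) ⟨τ.1, hπ, τ.2⟩
    · -- SurjOn
      intro β hβ
      simp only [Set.mem_setOf_eq] at hβ
      obtain ⟨hβ1, hβ2⟩ := hβ
      have hconst := aux_key_const t dim htwo0 hconn β hβ2
      set α : {τ : X // dim τ = t} → K := fun τ =>
        β ⟨(h0ne τ.1).choose, (h0ne τ.1).choose_spec.2⟩
          ⟨τ.1, (h0ne τ.1).choose_spec.1, τ.2⟩ with hαdef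
      have hαval : ∀ (τ : X) (hτ : dim τ = t) (a : X) (ha : a ≤ τ) (ha0 : dim a = 0),
          α ⟨τ, hτ⟩ = β ⟨a, ha0⟩ ⟨τ, ha, hτ⟩ := by
        intro τ hτ a ha ha0
        exact hconst τ hτ (h0ne τ).choose a (h0ne τ).choose_spec.1
          (h0ne τ).choose_spec.2 ha ha0
      refine ⟨α, ?_, ?_⟩
      · -- α ∈ S
        simp only [Set.mem_setOf_eq]
        intro σ h'
        obtain ⟨π₀, hπ₀σ, hπ₀0⟩ := h0ne σ
        have H := hβ1 ⟨π₀, hπ₀0⟩ σ hπ₀σ h'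
        have heq : (fun τ' : UpSet dim σ t => α ⟨τ'.1, τ'.2.2⟩)
            = (fun τ' : UpSet dim σ t =>
                β ⟨π₀, hπ₀0⟩ ⟨τ'.1, hπ₀σ.trans τ'.2.1, τ'.2.2⟩) := by
          funext τ'
          exact hαval τ'.1 τ'.2.2 π₀ (hπ₀σ.trans τ'.2.1) hπ₀0
        rw [heq]
        exact H
      · -- φ α = β
        funext π τ'
        exact hαval τ'.1 τ'.2.2 π.1 τ'.2.1 π.2
end

section
/- Let F₁, F₂ be the Tanner sheaves on X associated with two families of local codes {C_{1,σ}} and {C_{2,σ}} (σ ∈ X(t−1)). Then for any α ∈ C^i(X,F₁) and β ∈ C^j(X,F₂), the Leibniz rule δ(α∪β) = (δα)∪β + α∪(δβ) holds in C^{i+j+1}(X, F₁⊙F₂); explicitly, for every (i+j+1)-simplex ρ and every t-simplex τ ⊇ ρ, (δ(α∪β))(ρ)(τ) = ((δα)∪β)(ρ)(τ) + (α∪(δβ))(ρ)(τ). -/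
set_option linter.unusedSectionVars false

namespace SheafCup

variable {V : Type*} [Fintype V] [LinearOrder V]
variable {K : Type*} [Field K]

/-- `X_{≥σ}(t)`: the `t`-simplices (i.e. those with `t+1` vertices) of `X` containing `σ`. -/
abbrev Up (X : Set (Finset V)) [DecidablePred (· ∈ X)] (σ : Finset V) (t : ℕ) : Type _ :=
  {τ : Finset V // τ ∈ X ∧ σ ⊆ τ ∧ τ.card = t + 1}

/-- The first `i+1` vertices of `σ` in increasing order. -/
def frontFace (i : ℕ) (σ : Finset V) : Finset V :=
  ((σ.sort (· ≤ ·)).take (i + 1)).toFinset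

/-- The vertices of `σ` from position `i` on, in increasing order. -/
def backFace (i : ℕ) (σ : Finset V) : Finset V :=
  ((σ.sort (· ≤ ·)).drop i).toFinset

lemma frontFace_subset (i : ℕ) (σ : Finset V) : frontFace i σ ⊆ σ := by
  intro x hx
  have hx' : x ∈ (σ.sort (· ≤ ·)).take (i + 1) := List.mem_toFinset.mp hx
  have := (List.take_sublist (i + 1) (σ.sort (· ≤ ·))).subset hx'
  simpa [Finset.mem_sort] using this

lemma backFace_subset (i : ℕ) (σ : Finset V) : backFace i σ ⊆ σ := by
  intro x hx
  have hx' : x ∈ (σ.sort (· ≤ ·)).drop i := List.mem_toFinset.mp hx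
  have := (List.drop_sublist i (σ.sort (· ≤ ·))).subset hx'
  simpa [Finset.mem_sort] using this

/-- The cup product of an `i`-cochain `α` with a cochain `β`:
`(α∪β)(σ)(τ) = α(front_i σ)(τ) · β(back_i σ)(τ)`. -/
def cup (X : Set (Finset V)) [DecidablePred (· ∈ X)] (t i : ℕ)
    (α β : (σ : Finset V) → Up X σ t → K) : (σ : Finset V) → Up X σ t → K :=
  fun σ τ =>
    α (frontFace i σ) ⟨τ.1, τ.2.1, (frontFace_subset i σ).trans τ.2.2.1, τ.2.2.2⟩ *
    β (backFace i σ) ⟨τ.1, τ.2.1, (backFace_subset i σ).trans τ.2.2.1, τ.2.2.2⟩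

/-- The coboundary `(δα)(ρ)(τ) = Σ_{σ ∈ X, σ ⊂ ρ, |σ| = |ρ|−1} α(σ)(τ)`. -/
def cobdry (X : Set (Finset V)) [DecidablePred (· ∈ X)] (t : ℕ)
    (α : (σ : Finset V) → Up X σ t → K) : (σ : Finset V) → Up X σ t → K :=
  fun ρ τ => ∑ σ : Finset V,
    if h : σ ∈ X ∧ σ ⊆ ρ ∧ σ.card + 1 = ρ.card
    then α σ ⟨τ.1, τ.2.1, h.2.1.trans τ.2.2.1, τ.2.2.2⟩ else 0

/-- `c` is a section of the Tanner sheaf (with local codes `Cc`) over the cell `σ`: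
its restriction above every `(t−1)`-cell `σ' ⊇ σ` lies in the local code `Cc σ'`. -/
def IsSection (X : Set (Finset V)) [DecidablePred (· ∈ X)] (t : ℕ)
    (Cc : (σ' : Finset V) → Set (Up X σ' t → K)) (σ : Finset V)
    (c : Up X σ t → K) : Prop :=
  ∀ (σ' : Finset V), σ' ∈ X → σ'.card = t → ∀ (h3 : σ ⊆ σ'),
    (fun τ : Up X σ' t => c ⟨τ.1, τ.2.1, h3.trans τ.2.2.1, τ.2.2.2⟩) ∈ Cc σ'

/-- `α` is an `i`-cochain of the Tanner sheaf: `α(σ)` is a section over each `i`-simplex. -/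
def IsCochain (X : Set (Finset V)) [DecidablePred (· ∈ X)] (t : ℕ)
    (Cc : (σ' : Finset V) → Set (Up X σ' t → K)) (i : ℕ)
    (α : (σ : Finset V) → Up X σ t → K) : Prop :=
  ∀ σ : Finset V, σ ∈ X → σ.card = i + 1 → IsSection X t Cc σ (α σ)


/-- rank of `x` in `σ`: number of elements of `σ` strictly below `x`. -/
def rk (σ : Finset V) (x : V) : ℕ := (σ.filter (· < x)).card

lemma rk_le_rk {σ : Finset V} {x y : V} (h : x ≤ y) : rk σ x ≤ rk σ y := by
  apply Finset.card_le_card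
  intro z hz
  simp only [Finset.mem_filter] at *
  exact ⟨hz.1, lt_of_lt_of_le hz.2 h⟩

lemma rk_lt_rk {σ : Finset V} {x y : V} (hx : x ∈ σ) (h : x < y) : rk σ x < rk σ y := by
  apply Finset.card_lt_card
  constructor
  · intro z hz
    simp only [Finset.mem_filter] at *
    exact ⟨hz.1, hz.2.trans h⟩
  · intro hsub
    have := hsub (Finset.mem_filter.mpr ⟨hx, h⟩)
    simp at this

lemma lt_of_rk_lt {σ : Finset V} {x y : V} (h : rk σ x < rk σ y) : x < y := by
  by_contra hc
  exact absurd (rk_le_rk (σ := σ) (not_lt.mp hc)) (not_le.mpr h)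

lemma rk_injOn {σ : Finset V} {x y : V} (hx : x ∈ σ) (hy : y ∈ σ)
    (h : rk σ x = rk σ y) : x = y := by
  rcases lt_trichotomy x y with hl | he | hl
  · have := rk_lt_rk hx hl; omega
  · exact he
  · have := rk_lt_rk hy hl; omega

lemma rk_erase_of_le {σ : Finset V} {v x : V} (h : x ≤ v) :
    rk (σ.erase v) x = rk σ x := by
  unfold rk
  have hm : v ∉ σ.filter (· < x) :=
    fun hv => absurd (Finset.mem_filter.mp hv).2 (not_lt.mpr h)
  rw [Finset.filter_erase, Finset.erase_eq_of_notMem hm]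

lemma rk_erase_of_lt {σ : Finset V} {v x : V} (hv : v ∈ σ) (h : v < x) :
    rk (σ.erase v) x + 1 = rk σ x := by
  unfold rk
  have hm : v ∈ σ.filter (· < x) := Finset.mem_filter.mpr ⟨hv, h⟩
  rw [Finset.filter_erase, Finset.card_erase_of_mem hm]
  have : 0 < (σ.filter (· < x)).card := Finset.card_pos.mpr ⟨v, hm⟩
  omega

lemma filter_lt_sorted (l : List V) (hs : l.Pairwise (· < ·)) :
    ∀ p (hp : p < l.length), l.filter (fun y => decide (y < l[p])) = l.take p := by
  induction l with
  | nil => intro p hp; simp at hp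
  | cons a l ih =>
    rw [List.pairwise_cons] at hs
    intro p hp
    cases p with
    | zero =>
      simp only [List.take_zero]
      rw [List.filter_eq_nil_iff]
      intro y hy
      simp only [List.getElem_cons_zero, decide_eq_true_eq]
      rcases List.mem_cons.mp hy with rfl | hy'
      · exact lt_irrefl y
      · exact not_lt.mpr (hs.1 y hy').le
    | succ p =>
      have hp' : p < l.length := by simpa using hp
      have ha : a < l[p] := hs.1 _ (List.getElem_mem hp')
      simp only [List.getElem_cons_succ]
      rw [List.filter_cons_of_pos (by simpa using ha), ih hs.2 p hp', List.take_succ_cons]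

lemma rk_sort (σ : Finset V) (p : ℕ) (hp : p < (σ.sort (· ≤ ·)).length) :
    rk σ (σ.sort (· ≤ ·))[p] = p := by
  have hnd : (σ.sort (· ≤ ·)).Nodup := σ.sort_nodup _
  have key : σ.filter (· < (σ.sort (· ≤ ·))[p]) =
      ((σ.sort (· ≤ ·)).take p).toFinset := by
    rw [← filter_lt_sorted _ (σ.sortedLT_sort.pairwise) p hp]
    ext y
    simp [List.mem_filter, Finset.mem_sort]
  rw [rk, key, List.toFinset_card_of_nodup ((List.take_sublist _ _).nodup hnd),
    List.length_take]
  omega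


lemma mem_frontFace {m : ℕ} {σ : Finset V} {x : V} :
    x ∈ frontFace m σ ↔ x ∈ σ ∧ rk σ x ≤ m := by
  constructor
  · intro hx
    obtain ⟨q, hq, hqe⟩ := List.mem_iff_getElem.mp (List.mem_toFinset.mp hx)
    have hq2 : q < m + 1 := lt_of_lt_of_le hq (by rw [List.length_take]; exact min_le_left _ _)
    have hqlen : q < (σ.sort (· ≤ ·)).length :=
      lt_of_lt_of_le hq (by rw [List.length_take]; exact min_le_right _ _)
    rw [List.getElem_take] at hqe
    subst hqe
    exact ⟨(Finset.mem_sort _).mp (List.getElem_mem hqlen),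
      by rw [rk_sort σ q hqlen]; omega⟩
  · rintro ⟨hxσ, hrk⟩
    obtain ⟨p, hplen, hpe⟩ := List.mem_iff_getElem.mp ((Finset.mem_sort (· ≤ ·)).mpr hxσ)
    have hrkp : rk σ x = p := by rw [← hpe]; exact rk_sort σ p hplen
    apply List.mem_toFinset.mpr
    have hplen' : p < ((σ.sort (· ≤ ·)).take (m+1)).length := by
      rw [List.length_take]; omega
    have hmem := List.getElem_mem hplen'
    rwa [List.getElem_take, hpe] at hmem

lemma mem_backFace {m : ℕ} {σ : Finset V} {x : V} :
    x ∈ backFace m σ ↔ x ∈ σ ∧ m ≤ rk σ x := by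
  constructor
  · intro hx
    obtain ⟨q, hq, hqe⟩ := List.mem_iff_getElem.mp (List.mem_toFinset.mp hx)
    rw [List.getElem_drop] at hqe
    have hlen : m + q < (σ.sort (· ≤ ·)).length := by
      rw [List.length_drop] at hq; omega
    subst hqe
    exact ⟨(Finset.mem_sort _).mp (List.getElem_mem hlen),
      by rw [rk_sort σ _ hlen]; omega⟩
  · rintro ⟨hxσ, hrk⟩
    obtain ⟨p, hplen, hpe⟩ := List.mem_iff_getElem.mp ((Finset.mem_sort (· ≤ ·)).mpr hxσ)
    have hrkp : rk σ x = p := by rw [← hpe]; exact rk_sort σ p hplen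
    apply List.mem_toFinset.mpr
    have hq : p - m < ((σ.sort (· ≤ ·)).drop m).length := by rw [List.length_drop]; omega
    have hmem := List.getElem_mem hq
    rw [List.getElem_drop] at hmem
    have heq : (σ.sort (· ≤ ·))[m + (p - m)]'(by rw [List.length_drop] at hq; omega) =
        (σ.sort (· ≤ ·))[p]'hplen := by congr 1; omega
    rwa [heq, hpe] at hmem

lemma card_frontFace (m : ℕ) (σ : Finset V) : (frontFace m σ).card = min (m+1) σ.card := by
  rw [frontFace, List.toFinset_card_of_nodup ((List.take_sublist _ _).nodup (σ.sort_nodup _)),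
    List.length_take, Finset.length_sort]

lemma card_backFace (m : ℕ) (σ : Finset V) : (backFace m σ).card = σ.card - m := by
  rw [backFace, List.toFinset_card_of_nodup ((List.drop_sublist _ _).nodup (σ.sort_nodup _)),
    List.length_drop, Finset.length_sort]

lemma exists_rk (σ : Finset V) {k : ℕ} (hk : k < σ.card) : ∃ w ∈ σ, rk σ w = k := by
  have hk' : k < (σ.sort (· ≤ ·)).length := by rwa [Finset.length_sort]
  exact ⟨_, (Finset.mem_sort _).mp (List.getElem_mem hk'), rk_sort σ k hk'⟩

lemma frontFace_erase_low {ρ : Finset V} {v : V} {i : ℕ} (hv : v ∈ ρ) (hrk : rk ρ v ≤ i) :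
    frontFace i (ρ.erase v) = (frontFace (i+1) ρ).erase v := by
  ext x
  simp only [mem_frontFace, Finset.mem_erase]
  constructor
  · rintro ⟨⟨hxv, hxρ⟩, hr⟩
    refine ⟨hxv, hxρ, ?_⟩
    rcases lt_or_gt_of_ne hxv with h | h
    · rw [rk_erase_of_le h.le] at hr; omega
    · have := rk_erase_of_lt hv h; omega
  · rintro ⟨hxv, hxρ, hr⟩
    refine ⟨⟨hxv, hxρ⟩, ?_⟩
    rcases lt_or_gt_of_ne hxv with h | h
    · rw [rk_erase_of_le h.le]
      have := rk_lt_rk hxρ h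
      omega
    · have := rk_erase_of_lt hv h; omega

lemma backFace_erase_low {ρ : Finset V} {v : V} {i : ℕ} (hv : v ∈ ρ) (hrk : rk ρ v ≤ i) :
    backFace i (ρ.erase v) = backFace (i+1) ρ := by
  ext x
  simp only [mem_backFace, Finset.mem_erase]
  constructor
  · rintro ⟨⟨hxv, hxρ⟩, hr⟩
    refine ⟨hxρ, ?_⟩
    rcases lt_or_gt_of_ne hxv with h | h
    · rw [rk_erase_of_le h.le] at hr
      have := rk_lt_rk hxρ h
      omega
    · have := rk_erase_of_lt hv h; omega
  · rintro ⟨hxρ, hr⟩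
    have hlt : v < x := lt_of_rk_lt (σ := ρ) (by omega)
    refine ⟨⟨ne_of_gt hlt, hxρ⟩, ?_⟩
    have := rk_erase_of_lt hv hlt; omega

lemma frontFace_erase_high {ρ : Finset V} {v : V} {i : ℕ} (hv : v ∈ ρ) (hrk : i + 1 ≤ rk ρ v) :
    frontFace i (ρ.erase v) = frontFace i ρ := by
  ext x
  simp only [mem_frontFace, Finset.mem_erase]
  constructor
  · rintro ⟨⟨hxv, hxρ⟩, hr⟩
    refine ⟨hxρ, ?_⟩
    rcases lt_or_gt_of_ne hxv with h | h
    · rwa [rk_erase_of_le h.le] at hr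
    · have h1 := rk_erase_of_lt hv h
      have h2 := rk_lt_rk hv h
      omega
  · rintro ⟨hxρ, hr⟩
    have hlt : x < v := lt_of_rk_lt (σ := ρ) (by omega)
    refine ⟨⟨ne_of_lt hlt, hxρ⟩, ?_⟩
    rwa [rk_erase_of_le hlt.le]

lemma backFace_erase_high {ρ : Finset V} {v : V} {i : ℕ} (hv : v ∈ ρ) (hrk : i + 1 ≤ rk ρ v) :
    backFace i (ρ.erase v) = (backFace i ρ).erase v := by
  ext x
  simp only [mem_backFace, Finset.mem_erase]
  constructor
  · rintro ⟨⟨hxv, hxρ⟩, hr⟩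
    refine ⟨hxv, hxρ, ?_⟩
    rcases lt_or_gt_of_ne hxv with h | h
    · rwa [rk_erase_of_le h.le] at hr
    · have := rk_erase_of_lt hv h; omega
  · rintro ⟨hxv, hxρ, hr⟩
    refine ⟨⟨hxv, hxρ⟩, ?_⟩
    rcases lt_or_gt_of_ne hxv with h | h
    · rwa [rk_erase_of_le h.le]
    · have h1 := rk_erase_of_lt hv h
      have h2 := rk_lt_rk hv h
      omega

lemma frontFace_erase_top {ρ : Finset V} {w : V} {i : ℕ} (hw : w ∈ ρ) (hrk : rk ρ w = i + 1) :
    (frontFace (i+1) ρ).erase w = frontFace i ρ := by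
  ext x
  simp only [mem_frontFace, Finset.mem_erase]
  constructor
  · rintro ⟨hxw, hxρ, hr⟩
    refine ⟨hxρ, ?_⟩
    rcases eq_or_lt_of_le hr with he | hl
    · exact absurd (rk_injOn hxρ hw (by omega)) hxw
    · omega
  · rintro ⟨hxρ, hr⟩
    exact ⟨fun he => by subst he; omega, hxρ, by omega⟩

lemma backFace_erase_bot {ρ : Finset V} {w : V} {i : ℕ} (hw : w ∈ ρ) (hrk : rk ρ w = i) :
    (backFace i ρ).erase w = backFace (i+1) ρ := by
  ext x
  simp only [mem_backFace, Finset.mem_erase]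
  constructor
  · rintro ⟨hxw, hxρ, hr⟩
    refine ⟨hxρ, ?_⟩
    rcases eq_or_lt_of_le hr with he | hl
    · exact absurd (rk_injOn hxρ hw (by omega)) hxw
    · omega
  · rintro ⟨hxρ, hr⟩
    exact ⟨fun he => by subst he; omega, hxρ, by omega⟩

lemma filter_rk_le (i : ℕ) (ρ : Finset V) :
    ρ.filter (fun x => rk ρ x ≤ i) = frontFace i ρ := by
  ext x; simp [mem_frontFace]

lemma filter_rk_not_le (i : ℕ) (ρ : Finset V) :
    ρ.filter (fun x => ¬ rk ρ x ≤ i) = backFace (i+1) ρ := by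
  ext x
  simp only [Finset.mem_filter, mem_backFace, not_le]
  exact and_congr_right fun _ => Iff.rfl

lemma frontFace_insert {ρ : Finset V} {w : V} {i : ℕ} (hw : w ∈ ρ) (hrk : rk ρ w = i + 1) :
    frontFace (i+1) ρ = insert w (frontFace i ρ) := by
  ext x
  simp only [mem_frontFace, Finset.mem_insert]
  constructor
  · rintro ⟨hxρ, hr⟩
    rcases eq_or_lt_of_le hr with he | hl
    · exact Or.inl (rk_injOn hxρ hw (by omega))
    · exact Or.inr ⟨hxρ, by omega⟩
  · rintro (rfl | ⟨hxρ, hr⟩)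
    · exact ⟨hw, by omega⟩
    · exact ⟨hxρ, by omega⟩

lemma backFace_insert {ρ : Finset V} {w : V} {i : ℕ} (hw : w ∈ ρ) (hrk : rk ρ w = i) :
    backFace i ρ = insert w (backFace (i+1) ρ) := by
  ext x
  simp only [mem_backFace, Finset.mem_insert]
  constructor
  · rintro ⟨hxρ, hr⟩
    rcases eq_or_lt_of_le hr with he | hl
    · exact Or.inl (rk_injOn hxρ hw (by omega))
    · exact Or.inr ⟨hxρ, by omega⟩
  · rintro (rfl | ⟨hxρ, hr⟩)
    · exact ⟨hw, by omega⟩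
    · exact ⟨hxρ, by omega⟩


lemma cobdry_erase {X : Set (Finset V)} [DecidablePred (· ∈ X)] {t : ℕ}
    (hdown : ∀ σ ∈ X, ∀ σ' : Finset V, σ' ⊆ σ → σ'.Nonempty → σ' ∈ X)
    (γ : (σ : Finset V) → Up X σ t → K) {ρ : Finset V} (hρ : ρ ∈ X)
    (h2 : 2 ≤ ρ.card) (τ : Up X ρ t) :
    cobdry X t γ ρ τ = ∑ v ∈ ρ, γ (ρ.erase v)
      ⟨τ.1, τ.2.1, (Finset.erase_subset v ρ).trans τ.2.2.1, τ.2.2.2⟩ := by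
  have hP : ∀ v ∈ ρ, (ρ.erase v) ∈ X ∧ (ρ.erase v) ⊆ ρ ∧ (ρ.erase v).card + 1 = ρ.card := by
    intro v hv
    have hc := Finset.card_erase_of_mem hv
    exact ⟨hdown ρ hρ _ (Finset.erase_subset v ρ) (Finset.card_pos.mp (by omega)),
      Finset.erase_subset v ρ, by omega⟩
  have hinj : ∀ x ∈ ρ, ∀ y ∈ ρ, ρ.erase x = ρ.erase y → x = y := by
    intro x hx y hy hxy
    by_contra hne
    have hmem : x ∈ ρ.erase y := Finset.mem_erase.mpr ⟨hne, hx⟩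
    rw [← hxy] at hmem
    exact (Finset.notMem_erase x ρ) hmem
  have hvan : ∀ σ ∈ Finset.univ, σ ∉ ρ.image (ρ.erase ·) →
      (if h : σ ∈ X ∧ σ ⊆ ρ ∧ σ.card + 1 = ρ.card
        then γ σ ⟨τ.1, τ.2.1, h.2.1.trans τ.2.2.1, τ.2.2.2⟩ else 0) = 0 := by
    intro σ _ hσ
    rw [dif_neg]
    rintro ⟨hX, hsub, hcard⟩
    apply hσ
    have hne : σ ≠ ρ := fun h => by rw [h] at hcard; omega
    obtain ⟨v, hvρ, hvσ⟩ := Finset.exists_of_ssubset (lt_of_le_of_ne hsub hne)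
    refine Finset.mem_image.mpr ⟨v, hvρ, ?_⟩
    exact (Finset.eq_of_subset_of_card_le (Finset.subset_erase.mpr ⟨hsub, hvσ⟩)
      (by rw [Finset.card_erase_of_mem hvρ]; omega)).symm
  rw [cobdry, ← Finset.sum_subset (Finset.subset_univ (ρ.image (ρ.erase ·))) hvan,
    Finset.sum_image hinj]
  exact Finset.sum_congr rfl fun v hv => dif_pos (hP v hv)

end SheafCup

open SheafCup in
/-- Leibniz rule for the cup product of Tanner-sheaf cochains:
`δ(α∪β) = (δα)∪β + α∪(δβ)`, evaluated at every `(i+j+1)`-simplex `ρ` and every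
`t`-simplex `τ ⊇ ρ`. -/
theorem cup_leibniz
    {V : Type*} [Fintype V] [LinearOrder V]
    {K : Type*} [Field K] [Fintype K] [CharP K 2]
    (X : Set (Finset V)) [DecidablePred (· ∈ X)] (t : ℕ)
    (hne : ∀ σ ∈ X, σ.Nonempty)
    (hdown : ∀ σ ∈ X, ∀ σ' : Finset V, σ' ⊆ σ → σ'.Nonempty → σ' ∈ X)
    (hpure : ∀ σ ∈ X, ∃ τ ∈ X, σ ⊆ τ ∧ τ.card = t + 1)
    (C₁ C₂ : (σ' : Finset V) → Submodule K (Up X σ' t → K))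
    (i j : ℕ)
    (α β : (σ : Finset V) → Up X σ t → K)
    (hα : IsCochain X t (fun σ' => (C₁ σ' : Set (Up X σ' t → K))) i α)
    (hβ : IsCochain X t (fun σ' => (C₂ σ' : Set (Up X σ' t → K))) j β)
    (ρ : Finset V) (hρ : ρ ∈ X) (hcard : ρ.card = i + j + 2) (τ : Up X ρ t) :
    cobdry X t (cup X t i α β) ρ τ =
      cup X t (i + 1) (cobdry X t α) β ρ τ + cup X t i α (cobdry X t β) ρ τ := by
  have hρτ : ρ ⊆ τ.1 := τ.2.2.1
  set A : Finset V → K := fun σ =>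
    if h : σ ⊆ ρ then α σ ⟨τ.1, τ.2.1, h.trans τ.2.2.1, τ.2.2.2⟩ else 0 with hAdef
  set Bf : Finset V → K := fun σ =>
    if h : σ ⊆ ρ then β σ ⟨τ.1, τ.2.1, h.trans τ.2.2.1, τ.2.2.2⟩ else 0 with hBdef
  have hA : ∀ (σ : Finset V), σ ⊆ ρ →
      ∀ (p : τ.1 ∈ X ∧ σ ⊆ τ.1 ∧ τ.1.card = t + 1), α σ ⟨τ.1, p⟩ = A σ := by
    intro σ h p
    simp only [hAdef]
    rw [dif_pos h]
  have hB : ∀ (σ : Finset V), σ ⊆ ρ →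
      ∀ (p : τ.1 ∈ X ∧ σ ⊆ τ.1 ∧ τ.1.card = t + 1), β σ ⟨τ.1, p⟩ = Bf σ := by
    intro σ h p
    simp only [hBdef]
    rw [dif_pos h]
  obtain ⟨w₁, hw₁ρ, hw₁rk⟩ := exists_rk ρ (k := i+1) (by omega)
  obtain ⟨w₀, hw₀ρ, hw₀rk⟩ := exists_rk ρ (k := i) (by omega)
  have hFsub : frontFace (i+1) ρ ⊆ ρ := frontFace_subset _ _
  have hF0sub : frontFace i ρ ⊆ ρ := frontFace_subset _ _
  have hBsub : backFace i ρ ⊆ ρ := backFace_subset _ _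
  have hB1sub : backFace (i+1) ρ ⊆ ρ := backFace_subset _ _
  have hFcard : (frontFace (i+1) ρ).card = i + 2 := by
    rw [card_frontFace, hcard]; omega
  have hBcard : (backFace i ρ).card = j + 2 := by
    rw [card_backFace, hcard]; omega
  have hFX : frontFace (i+1) ρ ∈ X :=
    hdown ρ hρ _ hFsub (Finset.card_pos.mp (by omega))
  have hBX : backFace i ρ ∈ X :=
    hdown ρ hρ _ hBsub (Finset.card_pos.mp (by omega))
  have hR1 : cup X t (i+1) (cobdry X t α) β ρ τ
      = (∑ v ∈ frontFace (i+1) ρ, A ((frontFace (i+1) ρ).erase v)) * Bf (backFace (i+1) ρ) := by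
    simp only [cup]
    rw [cobdry_erase hdown α hFX (by omega), hB _ hB1sub _]
    congr 1
    refine Finset.sum_congr rfl fun v hv => ?_
    exact hA _ ((Finset.erase_subset v _).trans hFsub) _
  have hR2 : cup X t i α (cobdry X t β) ρ τ
      = A (frontFace i ρ) * ∑ v ∈ backFace i ρ, Bf ((backFace i ρ).erase v) := by
    simp only [cup]
    rw [cobdry_erase hdown β hBX (by omega), hA _ hF0sub _]
    congr 1
    refine Finset.sum_congr rfl fun v hv => ?_
    exact hB _ ((Finset.erase_subset v _).trans hBsub) _
  have hL : (∑ v ∈ ρ, cup X t i α β (ρ.erase v)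
        ⟨τ.1, τ.2.1, (Finset.erase_subset v ρ).trans τ.2.2.1, τ.2.2.2⟩)
      = (∑ v ∈ frontFace i ρ, A ((frontFace (i+1) ρ).erase v)) * Bf (backFace (i+1) ρ)
        + A (frontFace i ρ) * ∑ v ∈ backFace (i+1) ρ, Bf ((backFace i ρ).erase v) := by
    rw [← Finset.sum_filter_add_sum_filter_not ρ (fun v => rk ρ v ≤ i), filter_rk_le,
      filter_rk_not_le, Finset.sum_mul, Finset.mul_sum]
    congr 1
    · refine Finset.sum_congr rfl fun v hv => ?_
      obtain ⟨hvρ, hvrk⟩ := mem_frontFace.mp hv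
      simp only [cup]
      rw [hA _ ((frontFace_subset i _).trans (Finset.erase_subset v ρ)) _,
        hB _ ((backFace_subset i _).trans (Finset.erase_subset v ρ)) _,
        frontFace_erase_low hvρ hvrk, backFace_erase_low hvρ hvrk]
    · refine Finset.sum_congr rfl fun v hv => ?_
      obtain ⟨hvρ, hvrk⟩ := mem_backFace.mp hv
      simp only [cup]
      rw [hA _ ((frontFace_subset i _).trans (Finset.erase_subset v ρ)) _,
        hB _ ((backFace_subset i _).trans (Finset.erase_subset v ρ)) _,
        frontFace_erase_high hvρ hvrk, backFace_erase_high hvρ hvrk]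
  have hw₁notF₀ : w₁ ∉ frontFace i ρ := by
    rw [mem_frontFace]; rintro ⟨_, h⟩; omega
  have hw₀notB₁ : w₀ ∉ backFace (i+1) ρ := by
    rw [mem_backFace]; rintro ⟨_, h⟩; omega
  have hsum1 : ∑ v ∈ frontFace (i+1) ρ, A ((frontFace (i+1) ρ).erase v)
      = A (frontFace i ρ) + ∑ v ∈ frontFace i ρ, A ((frontFace (i+1) ρ).erase v) := by
    calc ∑ v ∈ frontFace (i+1) ρ, A ((frontFace (i+1) ρ).erase v)
        = ∑ v ∈ insert w₁ (frontFace i ρ), A ((frontFace (i+1) ρ).erase v) := by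
          rw [← frontFace_insert hw₁ρ hw₁rk]
      _ = A ((frontFace (i+1) ρ).erase w₁)
            + ∑ v ∈ frontFace i ρ, A ((frontFace (i+1) ρ).erase v) :=
          Finset.sum_insert hw₁notF₀
      _ = A (frontFace i ρ) + ∑ v ∈ frontFace i ρ, A ((frontFace (i+1) ρ).erase v) := by
          rw [frontFace_erase_top hw₁ρ hw₁rk]
  have hsum2 : ∑ v ∈ backFace i ρ, Bf ((backFace i ρ).erase v)
      = Bf (backFace (i+1) ρ) + ∑ v ∈ backFace (i+1) ρ, Bf ((backFace i ρ).erase v) := by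
    calc ∑ v ∈ backFace i ρ, Bf ((backFace i ρ).erase v)
        = ∑ v ∈ insert w₀ (backFace (i+1) ρ), Bf ((backFace i ρ).erase v) := by
          rw [← backFace_insert hw₀ρ hw₀rk]
      _ = Bf ((backFace i ρ).erase w₀)
            + ∑ v ∈ backFace (i+1) ρ, Bf ((backFace i ρ).erase v) :=
          Finset.sum_insert hw₀notB₁
      _ = Bf (backFace (i+1) ρ) + ∑ v ∈ backFace (i+1) ρ, Bf ((backFace i ρ).erase v) := by
          rw [backFace_erase_bot hw₀ρ hw₀rk]
  have h2K : (2 : K) = 0 := by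
    have := CharP.cast_eq_zero K 2
    exact_mod_cast this
  rw [cobdry_erase hdown (cup X t i α β) hρ (by omega) τ, hL, hR1, hR2, hsum1, hsum2]
  linear_combination (-(A (frontFace i ρ) * Bf (backFace (i+1) ρ))) * h2K
end
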